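/- For every function f holomorphic on the open unit disc with |f(z)| ≤ 1 for all z in the disc, every compact subset L of the disc, and every ε > 0, there exists a finite Blaschke product B such that |B(z) − f(z)| < ε for all z ∈ L. -/

import Mathlib

/-!
Replacing `f` by `z ↦ (1 - δ) f(r z)` with `r < 1` close to `1` costs little on `L` and gives a
function holomorphic beyond the closed disc, of modulus at most `1 - δ`; one of its Taylor
polynomials `p` is close to `f` on `L` and satisfies `|p| ≤ s < 1` on the unit circle.

For such `p` and `m > deg p`, all zeros `wₖ` of `A = z ^ m + p` lie in the open disc: at a zero `w`
with `|w| ≥ 1`, the reversed polynomial `z ^ m p(1/z)` would take the value `-1` at the point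
`1/w` of the closed disc, where the maximum modulus principle bounds it by `s`. The Blaschke
product with zeros `wₖ` is `A / D`, where `D(z) = ∏ (1 - conj wₖ z) = 1 + z ^ m conj (p(1/conj z))`.
The reversed polynomial is divisible by `z ^ (m - deg p)`, so on `|z| ≤ ρ < 1` both `z ^ m` and
`D - 1` are `O(ρ ^ (m - deg p))`, and `A / D` is uniformly close to `p` once `m` is large.
-/

open Complex Metric MeasureTheory Filter Set

noncomputable section

/-- A finite Blaschke product: a unimodular constant times a finite product of
disc automorphisms `z ↦ (z - wₖ)/(1 - conj wₖ · z)` with `wₖ` in the open unit disc. -/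
def IsFiniteBlaschke (B : ℂ → ℂ) : Prop :=
  ∃ (n : ℕ) (ζ : ℂ) (w : Fin (n + 1) → ℂ),
    ‖ζ‖ = 1 ∧ (∀ k, ‖w k‖ < 1) ∧
    ∀ z : ℂ, B z = ζ * ∏ k, (z - w k) / (1 - (starRingEnd ℂ) (w k) * z)

/-- Arclength measure on the unit circle, viewed as a measure on `ℂ`. -/
def arclength : Measure ℂ :=
  Measure.map (circleMap 0 1) (volume.restrict (Set.Ioc 0 (2 * Real.pi)))

open Topology Polynomial

theorem norm_le_of_forall_mem_sphere_norm_le {F : Type*} [NormedAddCommGroup F] [NormedSpace ℂ F]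
    {f : ℂ → F} (hf : Differentiable ℂ f) {c : ℂ} {r : ℝ} (hr : r ≠ 0) {C : ℝ}
    (hC : ∀ z ∈ sphere c r, ‖f z‖ ≤ C) {z : ℂ} (hz : z ∈ closedBall c r) : ‖f z‖ ≤ C := by
  refine Complex.norm_le_of_forall_mem_frontier_norm_le isBounded_ball hf.diffContOnCl
    (by rwa [frontier_ball c hr]) (by rwa [closure_ball c hr])

namespace Polynomial

section Field

variable {K : Type*} [Field K]

theorem eval_reflect_of_ne_zero {p : K[X]} {N : ℕ} (hN : p.natDegree ≤ N) {z : K} (hz : z ≠ 0) :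
    (p.reflect N).eval z = z ^ N * p.eval z⁻¹ := by
  let := invertibleOfNonzero (inv_ne_zero hz)
  have h := eval₂_reflect_mul_pow (RingHom.id K) z⁻¹ N p hN
  rw [invOf_eq_inv, inv_inv, eval₂_id, eval₂_id] at h
  rw [← h, mul_left_comm, ← mul_pow, mul_inv_cancel₀ hz, one_pow, mul_one]

theorem prod_roots_one_sub_mul_eq_eval_reverse {A : K[X]} (hA : A.Monic) (hsplit : A.Splits)
    (u : K) :
    (A.roots.map fun w => 1 - w * u).prod = A.reverse.eval u := by
  rcases eq_or_ne u 0 with rfl | hu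
  · simp [← coeff_zero_eq_eval_zero, coeff_zero_reverse, hA.leadingCoeff]
  rw [reverse, eval_reflect_of_ne_zero le_rfl hu, hsplit.eval_eq_prod_roots_of_monic hA,
    hsplit.natDegree_eq_card_roots, ← Multiset.prod_replicate, ← Multiset.map_const',
    ← Multiset.prod_map_mul]
  congr 1
  refine Multiset.map_congr rfl fun w _ => ?_
  rw [mul_sub, mul_inv_cancel₀ hu, mul_comm]

theorem reverse_X_pow_add {p : K[X]} {m : ℕ} (hm : p.natDegree < m) :
    (X ^ m + p).reverse = 1 + p.reflect m := by
  rw [reverse, natDegree_add_eq_left_of_natDegree_lt (by simpa using hm), natDegree_X_pow,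
    reflect_add, reflect_monomial, revAt_le le_rfl, Nat.sub_self, pow_zero]

end Field

theorem prod_roots_sub_div_one_sub_conj_mul {A : ℂ[X]} (hA : A.Monic) (z : ℂ) :
    (A.roots.map fun w => (z - w) / (1 - (starRingEnd ℂ) w * z)).prod =
      A.eval z / (starRingEnd ℂ) (A.reverse.eval ((starRingEnd ℂ) z)) := by
  have hsplit := IsAlgClosed.splits A
  rw [Multiset.prod_map_div, ← hsplit.eval_eq_prod_roots_of_monic hA,
    ← prod_roots_one_sub_mul_eq_eval_reverse hA hsplit, map_multiset_prod, Multiset.map_map]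
  simp [mul_comm]

theorem norm_eval_reflect_le {p : ℂ[X]} {s : ℝ} (hp : ∀ z ∈ sphere (0:ℂ) 1, ‖p.eval z‖ ≤ s)
    {N j : ℕ} (hN : p.natDegree + j ≤ N) {z : ℂ} (hz : z ∈ closedBall (0:ℂ) 1) :
    ‖(p.reflect N).eval z‖ ≤ s * ‖z‖ ^ j := by
  obtain ⟨M, rfl⟩ : ∃ M, N = M + j := ⟨N - j, by omega⟩
  have hM : p.natDegree ≤ M := by omega
  have hfactor : p.reflect (M + j) = p.reflect M * X ^ j := by
    simpa [reflect_one] using reflect_mul p 1 hM (natDegree_one.trans_le j.zero_le)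
  have hsphere : ∀ u ∈ sphere (0:ℂ) 1, ‖(p.reflect M).eval u‖ ≤ s := by
    intro u hu
    have hu1 : ‖u‖ = 1 := by simpa using hu
    rw [eval_reflect_of_ne_zero hM (norm_ne_zero_iff.1 (by simp [hu1])), norm_mul, norm_pow, hu1,
      one_pow, one_mul]
    exact hp _ (by simpa using hu1)
  rw [hfactor, eval_mul, eval_pow, eval_X, norm_mul, norm_pow]
  exact mul_le_mul_of_nonneg_right
    (norm_le_of_forall_mem_sphere_norm_le (p.reflect M).differentiable one_ne_zero hsphere hz)
    (by positivity)

theorem norm_lt_one_of_isRoot_X_pow_add {p : ℂ[X]} {s : ℝ}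
    (hp : ∀ z ∈ sphere (0:ℂ) 1, ‖p.eval z‖ ≤ s) (hs : s < 1) {N : ℕ} (hN : p.natDegree ≤ N)
    {w : ℂ} (hw : (X ^ N + p).IsRoot w) : ‖w‖ < 1 := by
  by_contra! hw1
  have hw0 : w ≠ 0 := by rintro rfl; norm_num at hw1
  have hroot : p.eval w = -w ^ N := eq_neg_of_add_eq_zero_right (by simpa using hw)
  have hreflect : (p.reflect N).eval w⁻¹ = -1 := by
    rw [eval_reflect_of_ne_zero hN (inv_ne_zero hw0), inv_inv, hroot, inv_pow, mul_neg,
      inv_mul_cancel₀ (pow_ne_zero _ hw0)]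
  have hle := norm_eval_reflect_le hp (j := 0) (by simpa using hN) (z := w⁻¹)
    (by simpa using inv_le_one_of_one_le₀ hw1)
  rw [hreflect] at hle
  norm_num at hle
  linarith

end Polynomial

theorem isFiniteBlaschke_multiset_prod {s : Multiset ℂ} (hs : s ≠ 0) (h : ∀ w ∈ s, ‖w‖ < 1) :
    IsFiniteBlaschke fun z => (s.map fun w => (z - w) / (1 - (starRingEnd ℂ) w * z)).prod := by
  obtain ⟨n, hn⟩ : ∃ n, s.toList.length = n + 1 :=
    Nat.exists_eq_add_one.2 (by simpa using Multiset.card_pos.2 hs)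
  refine ⟨n, 1, fun k => s.toList[k.1], by simp,
    fun k => h _ (Multiset.mem_toList.1 (List.getElem_mem _)), fun z => ?_⟩
  set f : ℂ → ℂ := fun w => (z - w) / (1 - (starRingEnd ℂ) w * z)
  calc (s.map f).prod = (s.toList.map f).prod := by
        rw [← Multiset.prod_coe, ← Multiset.map_coe, Multiset.coe_toList]
    _ = ∏ i : Fin s.toList.length, f s.toList[i.1] := (Fin.prod_univ_fun_getElem _ _).symm
    _ = 1 * ∏ k : Fin (n + 1), f s.toList[k.1] := by
        rw [one_mul]; exact Fintype.prod_equiv (finCongr hn) _ _ fun k => rfl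

theorem norm_add_div_sub_le {𝕜 : Type*} [NormedField 𝕜] {x y d : 𝕜} (hd : ‖d - 1‖ ≤ 1 / 2) :
    ‖(x + y) / d - y‖ ≤ 2 * (‖x‖ + ‖y‖ * ‖d - 1‖) := by
  have hd' : 1 / 2 ≤ ‖d‖ := by
    have := norm_sub_norm_le (1 : 𝕜) d
    rw [norm_one, norm_sub_rev] at this
    linarith
  have hd0 : d ≠ 0 := norm_pos_iff.1 (by linarith)
  calc ‖(x + y) / d - y‖ = ‖x - y * (d - 1)‖ / ‖d‖ := by
        rw [← norm_div]; congr 1; field_simp; ring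
    _ ≤ (‖x‖ + ‖y‖ * ‖d - 1‖) / (1 / 2) := by
        gcongr
        exact (norm_sub_le _ _).trans_eq (by rw [norm_mul])
    _ = 2 * (‖x‖ + ‖y‖ * ‖d - 1‖) := by ring

theorem exists_isFiniteBlaschke_near_polynomial (p : ℂ[X]) {s ρ ε : ℝ} (hs : s < 1)
    (hp : ∀ z ∈ sphere (0:ℂ) 1, ‖p.eval z‖ ≤ s) (hρ : ρ < 1) (hε : 0 < ε) :
    ∃ B, IsFiniteBlaschke B ∧ ∀ z ∈ closedBall (0:ℂ) ρ, ‖B z - p.eval z‖ < ε := by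
  obtain ⟨j, hj⟩ := exists_pow_lt_of_lt_one (lt_min (by positivity : 0 < ε / 4) one_half_pos) hρ
  have hj0 : j ≠ 0 := by
    rintro rfl
    linarith [min_le_right (ε / 4) (1 / 2), pow_zero ρ]
  set m := p.natDegree + j
  set A : ℂ[X] := X ^ m + p
  have hm : p.natDegree < m := by omega
  have hA : A.Monic := monic_X_pow_add (degree_le_natDegree.trans_lt (by exact_mod_cast hm))
  have hroots : ∀ w ∈ A.roots, ‖w‖ < 1 := fun w hw =>
    norm_lt_one_of_isRoot_X_pow_add hp hs hm.le (isRoot_of_mem_roots hw)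
  have hroots0 : A.roots ≠ 0 := by
    rw [← Multiset.card_pos, ← (IsAlgClosed.splits A).natDegree_eq_card_roots,
      natDegree_add_eq_left_of_natDegree_lt (by simpa using hm), natDegree_X_pow]
    omega
  refine ⟨_, isFiniteBlaschke_multiset_prod hroots0 hroots, fun z hz => ?_⟩
  have hzρ : ‖z‖ ≤ ρ := by simpa using hz
  rw [prod_roots_sub_div_one_sub_conj_mul hA]
  set d := (starRingEnd ℂ) (A.reverse.eval ((starRingEnd ℂ) z))
  have hd : ‖d - 1‖ ≤ ρ ^ j := by
    have hle := norm_eval_reflect_le hp (le_refl m) (z := (starRingEnd ℂ) z)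
      (by simpa using hzρ.trans hρ.le)
    rw [RCLike.norm_conj] at hle
    calc ‖d - 1‖ = ‖(p.reflect m).eval ((starRingEnd ℂ) z)‖ := by
          simp [d, A, reverse_X_pow_add hm]
      _ ≤ ‖z‖ ^ j := hle.trans (mul_le_of_le_one_left (by positivity) (by linarith))
      _ ≤ ρ ^ j := by gcongr
  have hpz : ‖p.eval z‖ ≤ 1 :=
    norm_le_of_forall_mem_sphere_norm_le p.differentiable one_ne_zero
      (fun u hu => (hp u hu).trans hs.le) (closedBall_subset_closedBall hρ.le hz)
  have hzm : ‖z ^ m‖ ≤ ρ ^ j := by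
    rw [norm_pow]
    calc ‖z‖ ^ m ≤ ‖z‖ ^ j := pow_le_pow_of_le_one (norm_nonneg z) (by linarith) (by omega)
      _ ≤ ρ ^ j := by gcongr
  calc ‖A.eval z / d - p.eval z‖ = ‖(z ^ m + p.eval z) / d - p.eval z‖ := by simp [A]
    _ ≤ 2 * (‖z ^ m‖ + ‖p.eval z‖ * ‖d - 1‖) :=
        norm_add_div_sub_le (hd.trans (hj.trans_le (min_le_right _ _)).le)
    _ ≤ 2 * (ρ ^ j + 1 * ρ ^ j) := by gcongr
    _ < ε := by linarith [min_le_left (ε / 4) (1 / 2)]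

theorem exists_norm_comp_mul_sub_lt {E : Type*} [NormedAddCommGroup E] {f : ℂ → E}
    (hf : ContinuousOn f (ball 0 1)) {L : Set ℂ} (hL : IsCompact L) (hLD : L ⊆ ball 0 1)
    {ε : ℝ} (hε : 0 < ε) : ∃ r ∈ Ioo (0:ℝ) 1, ∀ z ∈ L, ‖f (r * z) - f z‖ < ε := by
  have hmaps : MapsTo (fun q : ℝ × ℂ => (q.1 : ℂ) * q.2) (Icc 0 1 ×ˢ L) (ball 0 1) := by
    rintro ⟨t, z⟩ ⟨ht, hz⟩
    have hz1 : ‖z‖ < 1 := by simpa using hLD hz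
    simp only [mem_ball, dist_zero_right, norm_mul, norm_real, Real.norm_of_nonneg ht.1]
    nlinarith [ht.2, norm_nonneg z]
  obtain ⟨v, hv, hvf⟩ := hL.mem_uniformity_of_prod (f := fun (t : ℝ) z => f (t * z))
    (hf.comp (by fun_prop) hmaps) (right_mem_Icc.2 zero_le_one) (dist_mem_uniformity hε)
  have hv' : v ∈ 𝓝[<] (1:ℝ) := by
    rw [← nhdsWithin_Ioo_eq_nhdsLT (zero_lt_one' ℝ)]
    exact nhdsWithin_mono _ Ioo_subset_Icc_self hv
  obtain ⟨r, hrv, hr⟩ :=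
    Filter.nonempty_of_mem (inter_mem hv' (Ioo_mem_nhdsLT (zero_lt_one' ℝ)))
  exact ⟨r, hr, fun z hz => by simpa [dist_eq_norm] using hvf r hrv z hz⟩

theorem FormalMultilinearSeries.partialSum_eq_eval {𝕜 : Type*} [NontriviallyNormedField 𝕜]
    (q : FormalMultilinearSeries 𝕜 𝕜 𝕜) (n : ℕ) (z : 𝕜) :
    q.partialSum n z = (∑ i ∈ Finset.range n, C (q.coeff i) * X ^ i).eval z := by
  simp only [partialSum, eval_finsetSum, apply_eq_pow_smul_coeff, smul_eq_mul, eval_mul, eval_C,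
    eval_pow, eval_X, mul_comm]

theorem exists_polynomial_near_of_differentiableOn {g : ℂ → ℂ} {r R : ℝ}
    (hg : DifferentiableOn ℂ g (ball 0 R)) (hrR : r < R) {ε : ℝ} (hε : 0 < ε) :
    ∃ p : ℂ[X], ∀ z ∈ closedBall (0:ℂ) r, ‖g z - p.eval z‖ < ε := by
  rcases lt_or_ge r 0 with hr | hr
  · exact ⟨0, by simp [closedBall_eq_empty.2 hr]⟩
  obtain ⟨R₁, hrR₁, hR₁R⟩ := exists_between hrR
  obtain ⟨r₁, hrr₁, hr₁R₁⟩ := exists_between hrR₁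
  lift R₁ to NNReal using by linarith
  lift r₁ to NNReal using by linarith
  have hps := (hg.mono (closedBall_subset_ball hR₁R)).hasFPowerSeriesOnBall
    (NNReal.coe_pos.1 (by linarith))
  obtain ⟨N, hN⟩ := (tendstoUniformlyOn_iff.1
    (hps.tendstoUniformlyOn (by exact_mod_cast hr₁R₁)) ε hε).exists
  refine ⟨∑ i ∈ Finset.range N, C ((cauchyPowerSeries g 0 R₁).coeff i) * X ^ i, fun z hz => ?_⟩
  simpa [dist_eq_norm, FormalMultilinearSeries.partialSum_eq_eval]
    using hN z (closedBall_subset_ball hrr₁ hz)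

theorem exists_polynomial_norm_lt_one_near {f : ℂ → ℂ} (hf : DifferentiableOn ℂ f (ball 0 1))
    (hfb : ∀ z ∈ ball (0:ℂ) 1, ‖f z‖ ≤ 1) {L : Set ℂ} (hL : IsCompact L) (hLD : L ⊆ ball 0 1)
    {ε : ℝ} (hε : 0 < ε) :
    ∃ (p : ℂ[X]) (s : ℝ), s < 1 ∧ (∀ z ∈ closedBall (0:ℂ) 1, ‖p.eval z‖ ≤ s) ∧
      ∀ z ∈ L, ‖p.eval z - f z‖ < ε := by
  obtain ⟨r, ⟨hr0, hr1⟩, hfr⟩ :=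
    exists_norm_comp_mul_sub_lt hf.continuousOn hL hLD (by positivity : 0 < ε / 3)
  set δ := min (ε / 3) 1
  have hδ0 : 0 < δ := lt_min (by positivity) one_pos
  have hδ1 : δ ≤ 1 := min_le_right _ _
  set g : ℂ → ℂ := fun z => ((1 - δ : ℝ) : ℂ) * f (r * z)
  have hmaps : MapsTo (fun z : ℂ => (r : ℂ) * z) (ball 0 r⁻¹) (ball 0 1) := by
    intro z hz
    have : ‖z‖ < r⁻¹ := by simpa using hz
    simp only [mem_ball, dist_zero_right, norm_mul, norm_real, Real.norm_of_nonneg hr0.le]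
    calc r * ‖z‖ < r * r⁻¹ := by gcongr
      _ = 1 := mul_inv_cancel₀ hr0.ne'
  have hg : DifferentiableOn ℂ g (ball 0 r⁻¹) := (hf.comp (by fun_prop) hmaps).const_mul _
  have hnorm_g : ∀ z ∈ ball (0:ℂ) r⁻¹, ‖g z‖ ≤ 1 - δ := fun z hz => by
    rw [norm_mul, norm_real, Real.norm_of_nonneg (by linarith)]
    exact mul_le_of_le_one_right (by linarith) (hfb _ (hmaps hz))
  obtain ⟨p, hp⟩ := exists_polynomial_near_of_differentiableOn hg ((one_lt_inv₀ hr0).2 hr1)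
    (lt_min (half_pos hδ0) (by positivity : 0 < ε / 3))
  have hdisc : closedBall (0:ℂ) 1 ⊆ ball 0 r⁻¹ :=
    closedBall_subset_ball ((one_lt_inv₀ hr0).2 hr1)
  refine ⟨p, 1 - δ / 2, by linarith, fun z hz => ?_, fun z hz => ?_⟩
  · have h1 := hnorm_g z (hdisc hz)
    have h2 := (hp z hz).trans_le (min_le_left _ _)
    calc ‖p.eval z‖ ≤ ‖g z‖ + ‖g z - p.eval z‖ := norm_le_insert _ _
      _ ≤ 1 - δ / 2 := by linarith
  · have hzD := hLD hz
    have h1 := (hp z (ball_subset_closedBall hzD)).trans_le (min_le_right _ _)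
    have h2 := hfr z hz
    have h3 := hfb z hzD
    have hgf : g z - f z = ((1 - δ : ℝ) : ℂ) * (f (r * z) - f z) - (δ : ℂ) * f z := by
      simp only [g]; push_cast; ring
    have h4 : ‖g z - f z‖ ≤ ε / 3 + δ := by
      rw [hgf]
      refine (norm_sub_le _ _).trans ?_
      rw [norm_mul, norm_mul, norm_real, norm_real, Real.norm_of_nonneg (by linarith),
        Real.norm_of_nonneg hδ0.le]
      nlinarith [norm_nonneg (f (r * z) - f z)]
    calc ‖p.eval z - f z‖ ≤ ‖p.eval z - g z‖ + ‖g z - f z‖ :=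
          norm_sub_le_norm_sub_add_norm_sub _ _ _
      _ < ε := by rw [norm_sub_rev]; linarith [min_le_left (ε / 3) 1]

/-- Caratheodory's theorem: finite Blaschke products are dense in the closed unit ball of
`H^∞` for the topology of locally uniform convergence. -/
theorem caratheodory_approx (f : ℂ → ℂ)
    (hf : DifferentiableOn ℂ f (Metric.ball (0:ℂ) 1))
    (hfb : ∀ z ∈ Metric.ball (0:ℂ) 1, ‖f z‖ ≤ 1)
    (L : Set ℂ) (hL : IsCompact L) (hLD : L ⊆ Metric.ball (0:ℂ) 1)
    (ε : ℝ) (hε : 0 < ε) :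
    ∃ B : ℂ → ℂ, IsFiniteBlaschke B ∧ ∀ z ∈ L, ‖B z - f z‖ < ε := by
  obtain ⟨p, s, hs, hps, hpf⟩ := exists_polynomial_norm_lt_one_near hf hfb hL hLD (half_pos hε)
  obtain ⟨ρ, hρ, hLρ⟩ := exists_lt_subset_ball hL.isClosed hLD
  obtain ⟨B, hB, hBp⟩ := exists_isFiniteBlaschke_near_polynomial p hs
    (fun z hz => hps z (sphere_subset_closedBall hz)) hρ (half_pos hε)
  refine ⟨B, hB, fun z hz => ?_⟩
  have h1 := hBp z (ball_subset_closedBall (hLρ hz))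
  have h2 := hpf z hz
  calc ‖B z - f z‖ ≤ ‖B z - p.eval z‖ + ‖p.eval z - f z‖ :=
        norm_sub_le_norm_sub_add_norm_sub _ _ _
    _ < ε := by linarith
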